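/- The function κ(x) := sup{ κ_n(x) : n ∈ ℕ, n ≥ 2 } is discontinuous at every point of [0,1]. -/

import Mathlib

/-- `u` is a `p/q`-power: `u = x^n ++ y` with `x` nonempty, `y` a prefix of `x`,
`ℓ(u) = p` and `ℓ(x) = q`. -/
def IsPQPower {α : Type*} (u : List α) (p q : ℕ) : Prop :=
  0 < p ∧ 0 < q ∧ u.length = p ∧
    ∃ (x y : List α) (n : ℕ), x ≠ [] ∧ 0 < n ∧ y <+: x ∧ x.length = q ∧
      u = (List.replicate n x).flatten ++ y

/-- `u` is an `s`-power for the rational `s`. -/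
def IsPowerOfExp {α : Type*} (u : List α) (s : ℚ) : Prop :=
  ∃ p q : ℕ, IsPQPower u p q ∧ s = (p : ℚ) / q

/-- the finite word `u` occurs as a (contiguous) subword of the infinite word `w`. -/
def InfOccurs {α : Type*} (u : List α) (w : ℕ → α) : Prop :=
  ∃ i : ℕ, u = (List.range u.length).map fun k => w (i + k)

/-- the finite word `w` contains an `r`-power. -/
def ContainsPowFin {α : Type*} (w : List α) (r : ℚ) : Prop :=
  ∃ u : List α, u <:+: w ∧ ∃ s : ℚ, r ≤ s ∧ IsPowerOfExp u s

/-- the infinite word `w` contains an `r`-power. -/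
def ContainsPowInf {α : Type*} (w : ℕ → α) (r : ℚ) : Prop :=
  ∃ u : List α, InfOccurs u w ∧ ∃ s : ℚ, r ≤ s ∧ IsPowerOfExp u s

open Classical in
/-- critical exponent of a finite word. -/
noncomputable def Efin {α : Type*} (w : List α) : EReal :=
  if w = [] then 0
  else sSup {x : EReal | ∃ r : ℚ, ContainsPowFin w r ∧ x = ((r : ℝ) : EReal)}

/-- critical exponent of an infinite word. -/
noncomputable def Einf {α : Type*} (w : ℕ → α) : EReal :=
  sSup {x : EReal | ∃ r : ℚ, ContainsPowInf w r ∧ x = ((r : ℝ) : EReal)}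

/-- concatenation of a finite and an infinite word. -/
def wordCat {α : Type*} (w : List α) (y : ℕ → α) : ℕ → α :=
  fun n => if h : n < w.length then w[n] else y (n - w.length)

/-- the `k`-th digit of the base-`b` expansion of `x`, choosing for `b`-adic
rationals the expansion whose digits are ultimately `b - 1`. -/
noncomputable def baseDigit (b : ℕ) (x : ℝ) (k : ℕ) : ℕ :=
  if x ≤ 0 then 0
  else (⌈x * b ^ (k + 1)⌉ - b * ⌈x * b ^ k⌉ + ((b : ℤ) - 1)).toNat

/-- the base-`b` critical exponent function `κ_b`, with the convention `1/∞ = 0`. -/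
noncomputable def kappaBase (b : ℕ) (x : ℝ) : ℝ :=
  1 / (Einf (baseDigit b x)).toReal

/-- the `2`-critical exponent function `κ₂`. -/
noncomputable def kappa2 : ℝ → ℝ := kappaBase 2

/-- The Thue–Morse sequence. -/
def tm : ℕ → Fin 2
  | 0 => 0
  | (n + 1) => if (n + 1) % 2 = 0 then tm ((n + 1) / 2) else 1 - tm ((n + 1) / 2)
decreasing_by all_goals omega

/-- the real number whose binary expansion is the Thue–Morse sequence. -/
noncomputable def xtau : ℝ := ∑' i : ℕ, ((tm i : ℕ) : ℝ) / 2 ^ (i + 1)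

/-- `κ(x) = sup { κ_n(x) : n ∈ ℕ, n ≥ 2 }`. -/
noncomputable def kappaSup (x : ℝ) : ℝ :=
  sSup {y : ℝ | ∃ n : ℕ, 2 ≤ n ∧ y = kappaBase n x}

/-!
Every rational number has eventually periodic digits in every base, so all its critical exponents
are infinite and `κ` vanishes on `ℚ`. Conversely, for a base `n ≥ 3` and `x ∈ [0, 1]`, let `d`
be the first base-`n` digit of `x` and write the Thue–Morse word `t` with two digits other than
`d`. The number `0.d t₀ t₁ ⋯` is within `1 / n` of `x`, and its digit word is overlap-free by
Thue's theorem, so its critical exponent is at most `2` and `κ ≥ 1 / 2` there. Thus both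
`{κ = 0}` and `{κ ≥ 1 / 2}` are dense in `[0, 1]`.
-/

def HasOverlapAt {α : Type*} (w : ℕ → α) (i p : ℕ) : Prop :=
  ∀ k ≤ p, w (i + k) = w (i + p + k)

def IsOverlapFree {α : Type*} (w : ℕ → α) : Prop :=
  ∀ i p, 0 < p → ¬ HasOverlapAt w i p

lemma one_sub_ne_self_fin_two (t : Fin 2) : 1 - t ≠ t := by
  fin_cases t <;> decide

lemma tm_two_mul (m : ℕ) : tm (2 * m) = tm m := by
  cases m with
  | zero => rfl
  | succ m =>
    rw [show 2 * (m + 1) = 2 * m + 1 + 1 by ring, tm]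
    simp only [show (2 * m + 1 + 1) % 2 = 0 by omega, if_true]
    congr 1
    omega

lemma tm_two_mul_add_one (m : ℕ) : tm (2 * m + 1) = 1 - tm m := by
  rw [tm]
  simp only [show (2 * m + 1) % 2 ≠ 0 by omega, if_false]
  congr 2
  omega

lemma tm_two_mul_ne (m : ℕ) : tm (2 * m) ≠ tm (2 * m + 1) := by
  rw [tm_two_mul, tm_two_mul_add_one]
  exact (one_sub_ne_self_fin_two _).symm

lemma not_tm_eq_succ_and_succ_eq (j : ℕ) :
    ¬ (tm j = tm (j + 1) ∧ tm (j + 1) = tm (j + 2)) := by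
  rintro ⟨h₁, h₂⟩
  obtain ⟨m, rfl | rfl⟩ := Nat.even_or_odd' j
  · exact tm_two_mul_ne m h₁
  · exact tm_two_mul_ne (m + 1) h₂

lemma HasOverlapAt.tm_half {i e : ℕ} (h : HasOverlapAt tm i (2 * e)) :
    HasOverlapAt tm (i / 2) e := by
  intro k hk
  have hk' := h (2 * k) (by omega)
  obtain ⟨a, rfl | rfl⟩ := Nat.even_or_odd' i
  · rw [show 2 * a + 2 * k = 2 * (a + k) by ring,
      show 2 * a + 2 * e + 2 * k = 2 * (a + e + k) by ring, tm_two_mul, tm_two_mul] at hk'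
    rwa [show 2 * a / 2 = a by omega]
  · rw [show 2 * a + 1 + 2 * k = 2 * (a + k) + 1 by ring,
      show 2 * a + 1 + 2 * e + 2 * k = 2 * (a + e + k) + 1 by ring,
      tm_two_mul_add_one, tm_two_mul_add_one, sub_right_inj] at hk'
    rwa [show (2 * a + 1) / 2 = a by omega]

/-- In an overlap of odd period `2e + 1`, each aligned pair `tm (2m), tm (2m + 1)` is matched by the
misaligned pair `tm (2(m+e) + 1), tm (2(m+e+1))`, which forces `tm (m + e) = tm (m + e + 1)`. -/
lemma HasOverlapAt.tm_odd_eq {i e m : ℕ} (h : HasOverlapAt tm i (2 * e + 1)) (h₁ : i ≤ 2 * m)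
    (h₂ : 2 * m + 1 ≤ i + 2 * e + 1) : tm (m + e) = tm (m + e + 1) := by
  have e₀ := h (2 * m - i) (by omega)
  rw [show i + (2 * m - i) = 2 * m by omega,
    show i + (2 * e + 1) + (2 * m - i) = 2 * (m + e) + 1 by omega,
    tm_two_mul, tm_two_mul_add_one] at e₀
  have e₁ := h (2 * m + 1 - i) (by omega)
  rw [show i + (2 * m + 1 - i) = 2 * m + 1 by omega,
    show i + (2 * e + 1) + (2 * m + 1 - i) = 2 * (m + e + 1) by omega,
    tm_two_mul_add_one, tm_two_mul] at e₁
  rw [← e₁, e₀, sub_sub_cancel]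

lemma not_hasOverlapAt_tm_odd (i e : ℕ) : ¬ HasOverlapAt tm i (2 * e + 1) := by
  intro h
  rcases Nat.eq_zero_or_pos e with rfl | he
  · exact not_tm_eq_succ_and_succ_eq i ⟨h 0 (by omega), h 1 (by omega)⟩
  by_cases hgen : i % 2 = 0 ∨ 2 ≤ e
  · obtain ⟨m, hm₁, hm₂⟩ : ∃ m, i ≤ 2 * m ∧ 2 * m + 3 ≤ i + 2 * e + 1 := by
      rcases hgen with hi | he₂
      · exact ⟨i / 2, by omega, by omega⟩
      · exact ⟨(i + 1) / 2, by omega, by omega⟩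
    refine not_tm_eq_succ_and_succ_eq (m + e) ⟨h.tm_odd_eq hm₁ (by omega), ?_⟩
    have := h.tm_odd_eq (m := m + 1) (by omega) (by omega)
    rwa [show m + 1 + e = m + e + 1 by ring] at this
  obtain ⟨a, rfl⟩ : ∃ a, i = 2 * a + 1 := ⟨i / 2, by omega⟩
  obtain rfl : e = 1 := by omega
  have e₀ : tm (2 * a + 1) = tm (2 * (a + 2)) := h 0 (by omega)
  have e₁ : tm (2 * (a + 1)) = tm (2 * (a + 2) + 1) := h 1 (by omega)
  have e₂ : tm (2 * (a + 1) + 1) = tm (2 * (a + 3)) := h 2 (by omega)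
  have e₃ : tm (2 * (a + 2)) = tm (2 * (a + 3) + 1) := h 3 (by omega)
  simp only [tm_two_mul, tm_two_mul_add_one] at e₀ e₁ e₂ e₃
  have h₂ : tm (a + 2) = tm a := by
    rw [e₃, ← e₂, e₁, ← e₀, sub_sub_cancel, sub_sub_cancel]
  exact one_sub_ne_self_fin_two _ (e₀.trans h₂)

theorem tm_isOverlapFree : IsOverlapFree tm := by
  intro i p hp
  induction p using Nat.strong_induction_on generalizing i with
  | _ p ih =>
    intro h
    obtain ⟨e, rfl | rfl⟩ := Nat.even_or_odd' p
    · exact ih e (by omega) (i / 2) (by omega) h.tm_half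
    · exact not_hasOverlapAt_tm_odd i e h

section OverlapFree

variable {α β : Type*} {w : ℕ → α}

lemma IsOverlapFree.comp (hw : IsOverlapFree w) {f : α → β} (hf : Function.Injective f) :
    IsOverlapFree (f ∘ w) :=
  fun i p hp h => hw i p hp fun k hk => hf (h k hk)

lemma IsOverlapFree.cons (hw : IsOverlapFree w) {d : α} (hd : ∀ k, w k ≠ d) :
    IsOverlapFree (Stream'.cons d w) := by
  rintro (_ | i) p hp h
  · obtain ⟨p, rfl⟩ := Nat.exists_eq_add_of_lt hp
    have h₀ := h 0 (by omega)
    rw [show 0 + (0 + p + 1) + 0 = p + 1 by omega] at h₀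
    exact hd p h₀.symm
  · refine hw i p hp fun k hk => ?_
    have := h k hk
    rwa [show i + 1 + k = (i + k) + 1 by ring, show i + 1 + p + k = (i + p + k) + 1 by ring] at this

lemma IsOverlapFree.exists_ne (hw : IsOverlapFree w) (k : ℕ) (a : α) :
    ∃ i, k ≤ i ∧ w i ≠ a := by
  by_contra! h
  exact hw k 1 one_pos fun j _ => by rw [h _ (by omega), h _ (by omega)]

end OverlapFree

section CriticalExponent

variable {α : Type*}

lemma IsPQPower.exists_isPrefix_append {u : List α} {p q : ℕ} (h : IsPQPower u p q) :
    ∃ x : List α, x.length = q ∧ u <+: x ++ u := by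
  obtain ⟨-, -, -, -, y, n, -, -, ⟨t, rfl⟩, hq, rfl⟩ := h
  refine ⟨y ++ t, hq, t ++ y, ?_⟩
  have hcomm : (y ++ t) ++ (List.replicate n (y ++ t)).flatten =
      (List.replicate n (y ++ t)).flatten ++ (y ++ t) := by
    rw [← List.flatten_cons, ← List.replicate_succ, List.replicate_succ', List.flatten_append,
      List.flatten_singleton]
  rw [← List.append_assoc (y ++ t), hcomm]
  simp only [List.append_assoc]

lemma IsPQPower.getElem_add {u : List α} {p q : ℕ} (h : IsPQPower u p q) {j : ℕ}
    (hj : j + q < u.length) : u[j] = u[j + q] := by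
  obtain ⟨x, hxq, hpre⟩ := h.exists_isPrefix_append
  rw [hpre.getElem hj, List.getElem_append_right (by omega)]
  congr 1
  omega

lemma IsPQPower.le_two_mul_of_isOverlapFree {w : ℕ → α} (hw : IsOverlapFree w) {u : List α}
    {p q : ℕ} (h : IsPQPower u p q) (hu : InfOccurs u w) : p ≤ 2 * q := by
  obtain ⟨-, hq, hp, -⟩ := id h
  obtain ⟨i, hi⟩ := hu
  by_contra! hpq
  refine hw i q hq fun k hk => ?_
  have hk' : k + q < u.length := by omega
  have hval : ∀ j (hj : j < u.length), u[j] = w (i + j) := fun j hj => by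
    rw [List.getElem_of_eq hi hj, List.getElem_map, List.getElem_range]
  have := h.getElem_add hk'
  rwa [hval, hval, ← add_assoc, add_right_comm] at this

lemma le_einf {w : ℕ → α} {r : ℚ} (h : ContainsPowInf w r) :
    ((r : ℝ) : EReal) ≤ Einf w :=
  le_sSup ⟨r, h, rfl⟩

lemma einf_le {w : ℕ → α} {c : ℝ} (h : ∀ r : ℚ, ContainsPowInf w r → (r : ℝ) ≤ c) :
    Einf w ≤ c :=
  sSup_le <| by
    rintro _ ⟨r, hr, rfl⟩
    exact EReal.coe_le_coe_iff.mpr (h r hr)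

lemma one_le_einf (w : ℕ → α) : 1 ≤ Einf w := by
  have h : ContainsPowInf w 1 :=
    ⟨[w 0], ⟨0, by simp⟩, 1, le_rfl, 1, 1,
      ⟨one_pos, one_pos, rfl, [w 0], [], 1, by simp, one_pos, List.nil_prefix, rfl, by simp⟩,
      by norm_num⟩
  simpa using le_einf h

lemma einf_le_two_of_isOverlapFree {w : ℕ → α} (hw : IsOverlapFree w) :
    Einf w ≤ (2 : ℝ) := by
  refine einf_le fun r ⟨u, hu, s, hrs, p, q, hpq, hs⟩ => ?_
  have hq : (0 : ℚ) < q := by exact_mod_cast hpq.2.1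
  have hs₂ : s ≤ 2 := by
    rw [hs, div_le_iff₀ hq]
    exact_mod_cast hpq.le_two_mul_of_isOverlapFree hw hu
  exact_mod_cast hrs.trans hs₂

lemma Function.Periodic.map_range_mul {f : ℕ → α} {T : ℕ} (hf : Function.Periodic f T)
    (N : ℕ) :
    (List.range (N * T)).map f = (List.replicate N ((List.range T).map f)).flatten := by
  induction N with
  | zero => simp
  | succ N ih =>
    rw [add_one_mul, List.range_add, List.map_append, List.map_map, ih, List.replicate_succ',
      List.flatten_append, List.flatten_singleton]
    congr 1
    exact List.map_congr_left fun k _ => by simpa [add_comm] using hf.nat_mul N k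

lemma containsPowInf_of_periodic {w : ℕ → α} {K T : ℕ} (hT : 0 < T)
    (hw : Function.Periodic (fun k => w (K + k)) T) {N : ℕ} (hN : 0 < N) :
    ContainsPowInf w N := by
  refine ⟨(List.range (N * T)).map fun k => w (K + k), ⟨K, by simp⟩, N, le_rfl, N * T, T,
    ⟨by positivity, hT, by simp, (List.range T).map fun k => w (K + k), [], N, ?_, hN,
      List.nil_prefix, by simp, by rw [List.append_nil, hw.map_range_mul]⟩, ?_⟩
  · simpa using hT.ne'
  · push_cast
    field_simp

lemma einf_eq_top_of_periodic {w : ℕ → α} {K T : ℕ} (hT : 0 < T)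
    (hw : Function.Periodic (fun k => w (K + k)) T) : Einf w = ⊤ := by
  refine (EReal.eq_top_iff_forall_lt _).mpr fun y => ?_
  obtain ⟨N, hN⟩ := exists_nat_gt y
  calc (y : EReal) < ((N + 1 : ℕ) : ℝ) := by exact_mod_cast hN.trans (by simp)
    _ ≤ Einf w := by exact_mod_cast le_einf (containsPowInf_of_periodic hT hw N.succ_pos)

end CriticalExponent

lemma kappaBase_le_one (b : ℕ) (x : ℝ) : kappaBase b x ≤ 1 := by
  rcases eq_or_ne (Einf (baseDigit b x)) ⊤ with h | h
  · simp [kappaBase, h]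
  · have h₁ : (1 : ℝ) ≤ (Einf (baseDigit b x)).toReal := by
      simpa using EReal.toReal_le_toReal (one_le_einf _) (EReal.coe_ne_bot 1) h
    exact (div_le_one (by linarith)).mpr h₁

lemma one_div_le_kappaBase {b : ℕ} {x c : ℝ} (h : Einf (baseDigit b x) ≤ c) :
    1 / c ≤ kappaBase b x := by
  have h₁ : (1 : ℝ) ≤ (Einf (baseDigit b x)).toReal := by
    simpa using EReal.toReal_le_toReal (one_le_einf _) (EReal.coe_ne_bot 1)
      (ne_top_of_le_ne_top (by simp) h)
  have h₂ : (Einf (baseDigit b x)).toReal ≤ c := by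
    simpa using EReal.toReal_le_toReal h
      (ne_bot_of_le_ne_bot (EReal.coe_ne_bot 1) (one_le_einf _)) (by simp)
  exact one_div_le_one_div_of_le (by linarith) h₂

lemma kappaBase_le_kappaSup {b : ℕ} (hb : 2 ≤ b) (x : ℝ) : kappaBase b x ≤ kappaSup x :=
  le_csSup ⟨1, by rintro _ ⟨m, -, rfl⟩; exact kappaBase_le_one m x⟩ ⟨b, hb, rfl⟩

section Digits

open Real

lemma Real.ofDigits_eq_div {b : ℕ} (a : ℕ → Fin b) :
    ofDigits a = (a 0 + ofDigits fun i => a (i + 1)) / b := by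
  rw [ofDigits_eq_sum_add_ofDigits a 1]
  simp [ofDigitsTerm]
  ring

lemma Real.ofDigits_pos {b : ℕ} {a : ℕ → Fin b} {i : ℕ} (hi : (a i : ℕ) ≠ 0) :
    0 < ofDigits a := by
  refine summable_ofDigitsTerm.tsum_pos (fun _ => ofDigitsTerm_nonneg) i ?_
  have : (0 : ℝ) < (a i : ℕ) := by exact_mod_cast Nat.pos_of_ne_zero hi
  have := (a i).pos
  unfold ofDigitsTerm
  positivity

/-- With `x = 0.a₀ a₁ ⋯`, the tails `T k = 0.a_k a_{k+1} ⋯` lie in `(0, 1]` and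
`x * b ^ k - T k` is an integer, so `⌈x * b ^ k⌉ = x * b ^ k - T k + 1`. -/
theorem baseDigit_ofDigits {b : ℕ} {a : ℕ → Fin b} (ha : ∀ k, ∃ i, k ≤ i ∧ (a i : ℕ) ≠ 0)
    (k : ℕ) :
    baseDigit b (ofDigits a) k = a k := by
  set x := ofDigits a
  set T : ℕ → ℝ := fun k => ofDigits fun i => a (i + k) with hTdef
  have hb : (b : ℝ) ≠ 0 := by exact_mod_cast (a 0).pos.ne'
  have hT0 : T 0 = x := rfl
  have hTsucc : ∀ k, T k * b = a k + T (k + 1) := fun k => by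
    simp only [hTdef, ofDigits_eq_div (fun i => a (i + k)), zero_add, add_right_comm _ 1 k,
      add_assoc]
    field_simp
  have hTpos : ∀ k, 0 < T k := fun k => by
    obtain ⟨i, hki, hi⟩ := ha k
    exact ofDigits_pos (i := i - k) (by rwa [Nat.sub_add_cancel hki])
  have hceil : ∀ k, (⌈x * b ^ k⌉ : ℝ) = x * b ^ k - T k + 1 := by
    intro k
    obtain ⟨z, hz⟩ : ∃ z : ℤ, x * b ^ k = z + T k := by
      induction k with
      | zero => exact ⟨0, by simp [hT0]⟩
      | succ k ih =>
        obtain ⟨z, hz⟩ := ih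
        refine ⟨z * b + a k, ?_⟩
        rw [pow_succ, ← mul_assoc, hz, add_mul, hTsucc]
        push_cast
        ring
    have hTceil : ⌈T k⌉ = 1 :=
      Int.ceil_eq_iff.mpr ⟨by simpa using hTpos k, by simpa using ofDigits_le_one _⟩
    rw [hz, add_comm, Int.ceil_add_intCast, hTceil]
    push_cast
    ring
  have hdigit : ⌈x * b ^ (k + 1)⌉ - b * ⌈x * b ^ k⌉ + ((b : ℤ) - 1) = (a k : ℤ) := by
    have h := hTsucc k
    rw [← Int.cast_inj (α := ℝ)]
    push_cast
    rw [hceil, hceil, pow_succ]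
    linear_combination h
  rw [baseDigit, if_neg (not_le.mpr (hT0 ▸ hTpos 0)), hdigit, Int.toNat_natCast]

end Digits

lemma baseDigit_add_eq_of_sub_eq_intCast {b k l : ℕ} {x : ℝ} {z : ℤ}
    (h : x * b ^ k - x * b ^ l = z) (j : ℕ) :
    baseDigit b x (k + j) = baseDigit b x (l + j) := by
  have hshift : ∀ i, x * b ^ (k + i) = x * b ^ (l + i) + ((z * b ^ i : ℤ) : ℝ) := fun i => by
    push_cast
    rw [← h, pow_add, pow_add]
    ring
  unfold baseDigit
  split_ifs
  · rfl
  · rw [add_assoc k, add_assoc l, hshift, hshift, Int.ceil_add_intCast,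
      Int.ceil_add_intCast, pow_succ]
    congr 1
    ring

/-- The remainders of `num * b ^ k` modulo `den` take finitely many values, and two equal
remainders make `q * b ^ k₂ - q * b ^ k₁` an integer. -/
lemma baseDigit_ratCast_periodic (b : ℕ) (q : ℚ) :
    ∃ K T : ℕ, 0 < T ∧ Function.Periodic (fun k => baseDigit b q (K + k)) T := by
  obtain ⟨k₁, k₂, hlt, hmod⟩ := Set.Finite.exists_lt_map_eq_of_forall_mem
    (f := fun k : ℕ => q.num * b ^ k % q.den) (t := Set.Ico (0 : ℤ) q.den)
    (fun k => ⟨Int.emod_nonneg _ (by simp), Int.emod_lt_of_pos _ (by simp [q.pos])⟩)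
    (Set.finite_Ico _ _)
  obtain ⟨c, hc⟩ : (q.den : ℤ) ∣ q.num * b ^ k₂ - q.num * b ^ k₁ := Int.ModEq.dvd hmod
  have hsub : (q : ℝ) * b ^ k₂ - q * b ^ k₁ = c := by
    rw [Rat.cast_def, div_mul_eq_mul_div, div_mul_eq_mul_div, div_sub_div_same,
      div_eq_iff (by simp [q.den_ne_zero])]
    exact_mod_cast hc.trans (mul_comm _ _)
  refine ⟨k₁, k₂ - k₁, by omega, fun j => ?_⟩
  dsimp only
  rw [← baseDigit_add_eq_of_sub_eq_intCast hsub j]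
  congr 1
  omega

lemma kappaSup_ratCast (q : ℚ) : kappaSup q = 0 := by
  have hκ : ∀ b, kappaBase b q = 0 := fun b => by
    obtain ⟨K, T, hT, hper⟩ := baseDigit_ratCast_periodic b q
    simp [kappaBase, einf_eq_top_of_periodic hT hper]
  have hset : {y : ℝ | ∃ n : ℕ, 2 ≤ n ∧ y = kappaBase n q} = {0} := by
    ext y
    simp only [hκ]
    exact ⟨fun ⟨_, _, hy⟩ => hy, fun hy => ⟨2, le_rfl, hy⟩⟩
  rw [kappaSup, hset, csSup_singleton]

lemma exists_half_le_kappaBase_near {n : ℕ} (hn : 3 ≤ n) {x : ℝ}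
    (hx : x ∈ Set.Icc (0 : ℝ) 1) :
    ∃ y ∈ Set.Icc (0 : ℝ) 1, |y - x| ≤ 1 / n ∧ 1 / 2 ≤ kappaBase n y := by
  obtain ⟨m, rfl⟩ : ∃ m, n = m + 1 := ⟨n - 1, by omega⟩
  obtain ⟨a, -, rfl⟩ := Real.ofDigits_SurjOn (by omega : 1 < m + 1) hx
  set e : ℕ → Fin (m + 1) :=
    Stream'.cons (a 0) ((a 0).succAbove ∘ Fin.castLE (by omega) ∘ tm)
  have hfree : IsOverlapFree e :=
    ((tm_isOverlapFree.comp (Fin.castLE_injective _)).comp Fin.succAbove_right_injective).cons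
      fun _ => Fin.succAbove_ne _ _
  have hdigits : baseDigit (m + 1) (Real.ofDigits e) = fun k => (e k : ℕ) :=
    funext <| baseDigit_ofDigits fun k => by
      obtain ⟨i, hki, hi⟩ := hfree.exists_ne k 0
      exact ⟨i, hki, fun h => hi (Fin.ext h)⟩
  refine ⟨Real.ofDigits e, ⟨Real.ofDigits_nonneg e, Real.ofDigits_le_one e⟩, ?_, ?_⟩
  · simpa using Real.abs_ofDigits_sub_ofDigits_le (n := 1) (x := e) (y := a)
      fun i hi => by rw [Nat.lt_one_iff.mp hi]; rfl
  · have hE : Einf (baseDigit (m + 1) (Real.ofDigits e)) ≤ (2 : ℝ) := by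
      rw [hdigits]
      exact einf_le_two_of_isOverlapFree (hfree.comp Fin.val_injective)
    simpa using one_div_le_kappaBase hE

lemma Icc_subset_closure_setOf_half_le_kappaSup :
    Set.Icc (0 : ℝ) 1 ⊆ closure {y ∈ Set.Icc (0 : ℝ) 1 | 1 / 2 ≤ kappaSup y} := by
  intro x hx
  refine Metric.mem_closure_iff.mpr fun ε hε => ?_
  obtain ⟨N, hN⟩ := exists_nat_one_div_lt hε
  obtain ⟨y, hy, hxy, hκ⟩ := exists_half_le_kappaBase_near (n := N + 3) (by omega) hx
  refine ⟨y, ⟨hy, hκ.trans (kappaBase_le_kappaSup (by omega) y)⟩, ?_⟩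
  calc dist x y = |y - x| := by rw [Real.dist_eq, abs_sub_comm]
    _ ≤ 1 / ((N + 3 : ℕ) : ℝ) := hxy
    _ ≤ 1 / ((N : ℝ) + 1) := by gcongr; push_cast; linarith
    _ < ε := hN

theorem stmt_19 (x : ℝ) (hx : x ∈ Set.Icc (0 : ℝ) 1) :
    ¬ ContinuousWithinAt kappaSup (Set.Icc (0 : ℝ) 1) x := by
  intro hcont
  have hrat : Set.Icc (0 : ℝ) 1 ⊆ closure (Set.Icc 0 1 ∩ Set.range ((↑) : ℚ → ℝ)) :=
    calc Set.Icc (0 : ℝ) 1 = closure (Set.Ioo 0 1) := (closure_Ioo zero_ne_one).symm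
      _ ⊆ closure (Set.Ioo 0 1 ∩ Set.range ((↑) : ℚ → ℝ)) :=
        closure_minimal (Rat.denseRange_cast.open_subset_closure_inter isOpen_Ioo) isClosed_closure
      _ ⊆ closure (Set.Icc 0 1 ∩ Set.range ((↑) : ℚ → ℝ)) :=
        closure_mono (Set.inter_subset_inter_left _ Set.Ioo_subset_Icc_self)
  have hle : kappaSup x ≤ 0 := by
    simpa using (hcont.mono Set.inter_subset_left).mem_closure (hrat hx) (t := Set.Iic 0)
      (by rintro _ ⟨-, q, rfl⟩; exact (kappaSup_ratCast q).le)
  have hge : 1 / 2 ≤ kappaSup x := by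
    simpa using (hcont.mono (Set.sep_subset _ _)).mem_closure
      (Icc_subset_closure_setOf_half_le_kappaSup hx) (t := Set.Ici (1 / 2)) fun y hy => hy.2
  linarith
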